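/- Let n ≥ 1, let R = R₁ × R₂ × ⋯ × R_{n+1} be a product of n+1 commutative rings with identity, and let P be an n-absorbing I-prime ideal of R with P ≠ I·P. Then there exists an index i ∈ {1, …, n+1} such that the idempotent element e_i (having 1 in the i-th coordinate and 0 in all other coordinates) belongs to P. -/

import Mathlib

/-! Pick `p ∈ P \ I * P` and factor it as the product of the elements `Pi.mulSingle j (p j)`,
each agreeing with `p` in one coordinate and equal to `1` elsewhere. Absorption gives an index `i`
such that the product of all factors but the `i`-th lies in `P`; that product is `1` in coordinate
`i`, so multiplying it by `e_i` yields `e_i ∈ P`. -/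

/-- A proper ideal `P` of a commutative ring `R` is an `n`-absorbing `I`-prime ideal
if whenever a product of `n+1` elements lies in `P \ I*P`, the product of some `n`
of them (all but one) lies in `P`. -/
def IsNAbsorbingIPrime {R : Type*} [CommRing R] (n : ℕ) (I P : Ideal R) : Prop :=
  P ≠ ⊤ ∧ ∀ x : Fin (n + 1) → R, (∏ i, x i) ∈ P → (∏ i, x i) ∉ I * P →
    ∃ i : Fin (n + 1), (∏ j ∈ Finset.univ.erase i, x j) ∈ P

open Finset

theorem Ideal.exists_mem_notMem_mul_of_ne {R : Type*} [CommSemiring R] {I P : Ideal R}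
    (hne : P ≠ I * P) : ∃ p ∈ P, p ∉ I * P :=
  SetLike.exists_of_lt (lt_of_le_of_ne Ideal.mul_le_right hne.symm)

theorem Pi.prod_erase_mulSingle_apply_self {ι : Type*} [Fintype ι] [DecidableEq ι]
    {M : ι → Type*} [∀ i, CommMonoid (M i)] (p : ∀ i, M i) (i : ι) :
    (∏ j ∈ univ.erase i, Pi.mulSingle j (p j)) i = 1 := by
  rw [prod_apply]
  exact prod_eq_one fun j hj => Pi.mulSingle_eq_of_ne (ne_of_mem_erase hj).symm _

theorem Pi.single_one_mul_prod_erase_mulSingle {ι : Type*} [Fintype ι] [DecidableEq ι]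
    {R : ι → Type*} [∀ i, CommSemiring (R i)] (p : ∀ i, R i) (i : ι) :
    Pi.single i 1 * ∏ j ∈ univ.erase i, Pi.mulSingle j (p j) = Pi.single i 1 := by
  rw [← Pi.single_mul_left, Pi.prod_erase_mulSingle_apply_self, one_mul]

theorem stmt_17_general (n : ℕ) (R : Fin (n + 1) → Type*)
    [∀ i, CommRing (R i)] (I P : Ideal (∀ i, R i))
    (hP : IsNAbsorbingIPrime n I P) (hne : P ≠ I * P) :
    ∃ i : Fin (n + 1), (Pi.single i 1 : ∀ i, R i) ∈ P := by
  obtain ⟨p, hpP, hpI⟩ := Ideal.exists_mem_notMem_mul_of_ne hne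
  rw [← Finset.univ_prod_mulSingle p] at hpP hpI
  obtain ⟨i, hi⟩ := hP.2 (fun j => Pi.mulSingle j (p j)) hpP hpI
  exact ⟨i, Pi.single_one_mul_prod_erase_mulSingle p i ▸ P.mul_mem_left _ hi⟩

theorem stmt_17 (n : ℕ) (hn : 1 ≤ n) (R : Fin (n + 1) → Type*)
    [∀ i, CommRing (R i)] (I P : Ideal (∀ i, R i))
    (hP : IsNAbsorbingIPrime n I P) (hne : P ≠ I * P) :
    ∃ i : Fin (n + 1), (Pi.single i 1 : ∀ i, R i) ∈ P :=
  stmt_17_general n R I P hP hne
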